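/- arXiv:2305.03948 — 7 statements merged into one kernel-verified Lean document; each statement's English description precedes it below -/
import Mathlib

section
/- Let h be a positive definite Hermitian n×n matrix and Φ₀(x) := Σ_{j,k} h_{jk} x_j x̄_k. Let f(x,z) = ½ F_{xx}x·x + F_{xz}z·x + ½ F_{zz}z·z + l_x·x + l_z·z + f₀ be a holomorphic quadratic polynomial on ℂⁿ_x × ℂⁿ_z (F_{xx}, F_{zz} complex symmetric n×n matrices, l_x, l_z ∈ ℂⁿ, f₀ ∈ ℂ), with quadratic part f_q(x,z) := ½ F_{xx}x·x + F_{xz}z·x + ½ F_{zz}z·z and linear part f_l(x,z) := l_x·x + l_z·z. Assume there exists C ∈ ℝ such that 2 Re f(x,w̄) − Φ₀(x) − Φ₀(w) ≤ C for all (x,w) ∈ ℂⁿ × ℂⁿ. Then: (i) 2 Re f_q(x,w̄) ≤ Φ₀(x) + Φ₀(w) for all (x,w) ∈ ℂⁿ × ℂⁿ; (ii) whenever 2 Re f_q(x,w̄) = Φ₀(x) + Φ₀(w), one has Re f_l(x,w̄) = 0. -/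
open MeasureTheory Complex Matrix
open scoped ComplexOrder

noncomputable section

namespace BergerCoburn

variable {n : ℕ}

/-- The Hermitian quadratic form `Φ₀(x) = Σ_{j,k} h_{jk} x_j x̄_k`. -/
def PhiH (h : Matrix (Fin n) (Fin n) ℂ) (x : Fin n → ℂ) : ℝ :=
  (∑ j, ∑ k, h j k * x j * star (x k)).re

private lemma quad_aux {a b c C : ℝ} (H : ∀ t : ℝ, a*t^2 + b*t + c ≤ C) :
    a ≤ 0 ∧ (a = 0 → b = 0) := by
  have h0 := H 0
  simp at h0
  constructor
  · by_contra hpos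
    push_neg at hpos
    set t := max 1 ((C - c + 1)/a) with ht
    have h1 := H t
    have ht1 : (1:ℝ) ≤ t := le_max_left _ _
    have ht2 : (C - c + 1)/a ≤ t := le_max_right _ _
    have h2 := H (-t)
    have hkey : C - c + 1 ≤ a * t := by
      rw [div_le_iff₀ hpos] at ht2; linarith
    nlinarith [mul_le_mul_of_nonneg_left ht1 (le_of_lt hpos)]
  · intro ha
    by_contra hb
    have key : b * ((C - c + 1)/b) = C - c + 1 := by field_simp
    have := H ((C - c + 1)/b)
    rw [ha] at this
    nlinarith

private lemma PhiH_smul (h : Matrix (Fin n) (Fin n) ℂ) (t : ℝ) (x : Fin n → ℂ) :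
    PhiH h ((t:ℂ) • x) = t^2 * PhiH h x := by
  unfold PhiH
  have key : ∀ j k, h j k * ((t:ℂ) • x) j * star (((t:ℂ) • x) k)
      = ((t^2 : ℝ) : ℂ) * (h j k * x j * star (x k)) := by
    intro j k
    simp only [Pi.smul_apply, smul_eq_mul, star_mul', Complex.star_def,
      Complex.conj_ofReal, Complex.ofReal_pow]
    ring
  simp only [key, ← Finset.mul_sum, Complex.re_ofReal_mul]

/-- Proposition 2.1 of the paper.  Let `h` be positive definite Hermitian
and `Φ₀(x) = Σ h_{jk} x_j x̄_k`.  Let `f(x,z) = ½F_{xx}x·x + F_{xz}z·x + ½F_{zz}z·z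
+ l_x·x + l_z·z + f₀` be a holomorphic quadratic polynomial with quadratic part `f_q` and
linear part `f_l`.  If `2 Re f(x,w̄) - Φ₀(x) - Φ₀(w) ≤ C` for all `(x,w)`, then
`2 Re f_q(x,w̄) ≤ Φ₀(x) + Φ₀(w)` everywhere, and `Re f_l(x,w̄) = 0` whenever equality
holds. -/
theorem statement5
    (h : Matrix (Fin n) (Fin n) ℂ) (hpos : h.PosDef)
    (Fxx Fxz Fzz : Matrix (Fin n) (Fin n) ℂ) (hFxx : Fxx.IsSymm) (hFzz : Fzz.IsSymm)
    (lx lz : Fin n → ℂ) (f₀ : ℂ)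
    (f fq fl : (Fin n → ℂ) → (Fin n → ℂ) → ℂ)
    (hfq : ∀ x z, fq x z = (1 / 2 : ℂ) * ((Fxx.mulVec x) ⬝ᵥ x) + (Fxz.mulVec z) ⬝ᵥ x
      + (1 / 2 : ℂ) * ((Fzz.mulVec z) ⬝ᵥ z))
    (hfl : ∀ x z, fl x z = lx ⬝ᵥ x + lz ⬝ᵥ z)
    (hf : ∀ x z, f x z = fq x z + fl x z + f₀)
    (C : ℝ)
    (hbound : ∀ x w : Fin n → ℂ,
      2 * (f x (star w)).re - PhiH h x - PhiH h w ≤ C) :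
    (∀ x w : Fin n → ℂ, 2 * (fq x (star w)).re ≤ PhiH h x + PhiH h w) ∧
    (∀ x w : Fin n → ℂ, 2 * (fq x (star w)).re = PhiH h x + PhiH h w →
      (fl x (star w)).re = 0) := by
  have key : ∀ x w : Fin n → ℂ, ∀ t : ℝ,
      (2*(fq x (star w)).re - PhiH h x - PhiH h w) * t^2
        + (2*(fl x (star w)).re) * t + (2*f₀.re - C) ≤ 0 := by
    intro x w t
    have hb := hbound ((t:ℂ) • x) ((t:ℂ) • w)
    have hsw : star ((t:ℂ) • w) = (t:ℂ) • star w := by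
      funext k
      simp [Pi.smul_apply, Pi.star_apply, smul_eq_mul, star_mul',
        Complex.star_def, Complex.conj_ofReal, mul_comm]
    have hfqs : fq ((t:ℂ) • x) ((t:ℂ) • star w) = ((t^2:ℝ):ℂ) * fq x (star w) := by
      rw [hfq, hfq]
      simp only [Matrix.mulVec_smul, smul_dotProduct, dotProduct_smul, smul_eq_mul,
        Complex.ofReal_pow]
      ring
    have hfls : fl ((t:ℂ) • x) ((t:ℂ) • star w) = (t:ℂ) * fl x (star w) := by
      rw [hfl, hfl]
      simp only [dotProduct_smul, smul_eq_mul]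
      ring
    rw [hsw, hf, hfqs, hfls, PhiH_smul, PhiH_smul] at hb
    simp only [Complex.add_re, Complex.re_ofReal_mul] at hb
    nlinarith [hb]
  constructor
  · intro x w
    have := (quad_aux (key x w)).1
    linarith
  · intro x w heq
    have ha : 2*(fq x (star w)).re - PhiH h x - PhiH h w = 0 := by linarith
    have := (quad_aux (key x w)).2 ha
    linarith

end BergerCoburn
end
end

section
/- Let h be a positive definite Hermitian n×n matrix and Φ₀(x) := Σ_{j,k} h_{jk} x_j x̄_k, so that Λ_{Φ₀} = {(x, (2/i) h x̄) : x ∈ ℂⁿ} ⊂ ℂ²ⁿ. Let f(x,z) = ½ F_{xx}x·x + F_{xz}z·x + ½ F_{zz}z·z + l_x·x + l_z·z + f₀ be a holomorphic quadratic polynomial with F_{xx}, F_{zz} symmetric and F_{xz} invertible; let f_q and f_l be its quadratic and linear parts. Let κ_q : ℂ²ⁿ → ℂ²ⁿ be the complex linear map determined by κ_q(y, (2/i) h z) = (x, (2/i)(F_{xx}x + F_{xz}z)) with x = (F_{xz}ᵀ)⁻¹(hᵀ y − F_{zz} z), for all y, z ∈ ℂⁿ, and define the linear function m_l(x,ξ)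 := (2/i)(F_{xx}(F_{xz}ᵀ)⁻¹ l_z − l_x)·x − ((F_{xz}ᵀ)⁻¹ l_z)·ξ on ℂ²ⁿ. Assume: (a) 2 Re f_q(x,w̄) ≤ Φ₀(x) + Φ₀(w) for all x, w; (b) whenever 2 Re f_q(x,w̄) = Φ₀(x)+Φ₀(w), one has Re f_l(x,w̄) = 0; (c) Φ₁ is a strictly plurisubharmonic real quadratic form on ℂⁿ such that κ_q(Λ_{Φ₀}) = Λ_{Φ₁} and such that for all x, w ∈ ℂⁿ: (x, (2/i)(∂Φ₁/∂x)(x)) = κ_q(w, (2/i)(∂Φ₀/∂w)(w)) holds if and only if 2 Re f_q(x,w̄) = Φ₁(x) + Φ₀(w). Then Im m_l vanishes identically on the intersection Λ_{Φ₁} ∩ Λ_{Φ₀}. -/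
open Matrix Complex
open scoped ComplexOrder

noncomputable section

namespace BergerCoburn

variable {n : ℕ}

/-- The holomorphic part `∂Φ/∂x` of the differential of a real quadratic form `Φ` on `ℂⁿ`,
so that `dΦ_x(v) = B(x,v)` with `B` the polar form, and
`(∂Φ/∂x)_j = ½(dΦ_x(e_j) - i dΦ_x(i e_j))`. -/
def holGrad (Φ : (Fin n → ℂ) → ℝ) (x : Fin n → ℂ) : Fin n → ℂ := fun j =>
  (1 / 2 : ℂ) *
    (((Φ (x + (Pi.single j 1 : Fin n → ℂ)) - Φ x - Φ ((Pi.single j 1 : Fin n → ℂ)) : ℝ) : ℂ)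
      - Complex.I * ((Φ (x + Complex.I • (Pi.single j 1 : Fin n → ℂ)) - Φ x
          - Φ (Complex.I • (Pi.single j 1 : Fin n → ℂ)) : ℝ) : ℂ))

/-- The I-Lagrangian plane `Λ_Φ = {(x, (2/i)(∂Φ/∂x)(x)) : x ∈ ℂⁿ} ⊂ ℂ²ⁿ` associated to a real
quadratic form `Φ`. -/
def LambdaSet (Φ : (Fin n → ℂ) → ℝ) : Set ((Fin n → ℂ) × (Fin n → ℂ)) :=
  {p | ∃ x : Fin n → ℂ, p = (x, (2 / Complex.I) • holGrad Φ x)}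

/-- The plane `Λ_{Φ₀} = {(x, (2/i) h x̄)}` for the Hermitian weight given by `h`. -/
def Lambda0 (h : Matrix (Fin n) (Fin n) ℂ) : Set ((Fin n → ℂ) × (Fin n → ℂ)) :=
  {p | ∃ x : Fin n → ℂ, p = (x, (2 / Complex.I) • h.mulVec (star x))}


/-! ### Auxiliary lemmas -/

/-- The mixed (polar) term of `PhiH`. -/
def B0 (h : Matrix (Fin n) (Fin n) ℂ) (x v : Fin n → ℂ) : ℝ :=
  (∑ j, ∑ k, (h j k * x j * star (v k) + h j k * v j * star (x k))).re

lemma B0_sum (h : Matrix (Fin n) (Fin n) ℂ) (x v : Fin n → ℂ) :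
    (∑ j, ∑ k, (h j k * x j * star (v k) + h j k * v j * star (x k)))
      = (∑ j, (∑ k, h j k * star (v k)) * x j) + ∑ j, v j * (∑ k, h j k * star (x k)) := by
  rw [← Finset.sum_add_distrib]
  refine Finset.sum_congr rfl fun j _ => ?_
  rw [Finset.sum_add_distrib, Finset.sum_mul, Finset.mul_sum]
  congr 1
  · exact Finset.sum_congr rfl fun k _ => by ring
  · exact Finset.sum_congr rfl fun k _ => by ring

lemma herm_sum (h : Matrix (Fin n) (Fin n) ℂ) (hherm : h.IsHermitian) (x : Fin n → ℂ)
    (m : Fin n) : (∑ j, h j m * x j) = star ((h.mulVec (star x)) m) := by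
  rw [Matrix.mulVec, dotProduct, star_sum]
  refine Finset.sum_congr rfl fun j _ => ?_
  rw [star_mul', ← hherm.apply m j]
  simp

lemma B0_single (h : Matrix (Fin n) (Fin n) ℂ) (hherm : h.IsHermitian) (x : Fin n → ℂ)
    (m : Fin n) : B0 h x (Pi.single m 1) = 2 * ((h.mulVec (star x)) m).re := by
  unfold B0
  rw [B0_sum]
  have e1 : (∑ j, (∑ k, h j k * star ((Pi.single m 1 : Fin n → ℂ) k)) * x j)
      = star ((h.mulVec (star x)) m) := by
    have hc : ∀ j, (∑ k, h j k * star ((Pi.single m 1 : Fin n → ℂ) k)) = h j m := by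
      intro j
      simp [Pi.single_apply, apply_ite (star : ℂ → ℂ), mul_ite]
    simp only [hc]
    exact herm_sum h hherm x m
  have e2 : (∑ j, (Pi.single m 1 : Fin n → ℂ) j * (∑ k, h j k * star (x k)))
      = (h.mulVec (star x)) m := by
    simp [Pi.single_apply, ite_mul, Matrix.mulVec, dotProduct, Pi.star_apply]
  rw [e1, e2]
  simp only [Complex.add_re, Complex.star_def, Complex.conj_re]
  ring

lemma B0_Ismul_single (h : Matrix (Fin n) (Fin n) ℂ) (hherm : h.IsHermitian) (x : Fin n → ℂ)
    (m : Fin n) :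
    B0 h x (Complex.I • (Pi.single m 1 : Fin n → ℂ)) = -2 * ((h.mulVec (star x)) m).im := by
  unfold B0
  rw [B0_sum]
  have e1 : (∑ j, (∑ k, h j k * star ((Complex.I • (Pi.single m 1 : Fin n → ℂ)) k)) * x j)
      = -Complex.I * star ((h.mulVec (star x)) m) := by
    have hc : ∀ j, (∑ k, h j k * star ((Complex.I • (Pi.single m 1 : Fin n → ℂ)) k))
        = -Complex.I * h j m := by
      intro j
      simp [Pi.single_apply, Pi.smul_apply, smul_ite, apply_ite (star : ℂ → ℂ), mul_ite,
        Complex.star_def]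
      ring
    simp only [hc]
    rw [show (∑ j, -Complex.I * h j m * x j) = -Complex.I * ∑ j, h j m * x j by
      rw [Finset.mul_sum]; exact Finset.sum_congr rfl fun j _ => by ring]
    rw [herm_sum h hherm x m]
  have e2 : (∑ j, (Complex.I • (Pi.single m 1 : Fin n → ℂ)) j * (∑ k, h j k * star (x k)))
      = Complex.I * (h.mulVec (star x)) m := by
    simp [Pi.single_apply, Pi.smul_apply, smul_ite, ite_mul, Matrix.mulVec, dotProduct,
      Pi.star_apply]
  rw [e1, e2]
  simp only [Complex.add_re, Complex.mul_re, Complex.neg_re, Complex.neg_im, Complex.I_re,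
    Complex.I_im, Complex.star_def, Complex.conj_re, Complex.conj_im]
  ring

lemma B0_self (h : Matrix (Fin n) (Fin n) ℂ) (x : Fin n → ℂ) : B0 h x x = 2 * PhiH h x := by
  unfold B0 PhiH
  rw [show (∑ j, ∑ k, (h j k * x j * star (x k) + h j k * x j * star (x k)))
      = (2:ℂ) * ∑ j, ∑ k, h j k * x j * star (x k) by
    rw [Finset.mul_sum]
    refine Finset.sum_congr rfl fun j _ => ?_
    rw [Finset.mul_sum]
    exact Finset.sum_congr rfl fun k _ => by ring]
  simp [Complex.mul_re]

/-- `B0 h x` bundled as an `ℝ`-linear map in the second variable. -/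
def B0lin (h : Matrix (Fin n) (Fin n) ℂ) (x : Fin n → ℂ) : (Fin n → ℂ) →ₗ[ℝ] ℝ where
  toFun v := B0 h x v
  map_add' v w := by
    have key : (∑ j, ∑ k, (h j k * x j * star ((v + w) k) + h j k * (v + w) j * star (x k)))
        = (∑ j, ∑ k, (h j k * x j * star (v k) + h j k * v j * star (x k)))
          + (∑ j, ∑ k, (h j k * x j * star (w k) + h j k * w j * star (x k))) := by
      rw [← Finset.sum_add_distrib]
      refine Finset.sum_congr rfl fun j _ => ?_
      rw [← Finset.sum_add_distrib]
      refine Finset.sum_congr rfl fun k _ => ?_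
      simp only [Pi.add_apply, star_add]
      ring
    unfold B0
    rw [key, Complex.add_re]
  map_smul' r v := by
    have key : (∑ j, ∑ k, (h j k * x j * star ((r • v) k) + h j k * (r • v) j * star (x k)))
        = (r : ℂ) * ∑ j, ∑ k, (h j k * x j * star (v k) + h j k * v j * star (x k)) := by
      rw [Finset.mul_sum]
      refine Finset.sum_congr rfl fun j _ => ?_
      rw [Finset.mul_sum]
      refine Finset.sum_congr rfl fun k _ => ?_
      simp only [Pi.smul_apply, Complex.real_smul, star_mul', Complex.star_def,
        Complex.conj_ofReal]
      ring
    unfold B0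
    simp only [RingHom.id_apply, smul_eq_mul]
    rw [key, Complex.re_ofReal_mul]

lemma decomp (x : Fin n → ℂ) :
    x = ∑ m, ((x m).re • (Pi.single m 1 : Fin n → ℂ)
      + (x m).im • (Complex.I • (Pi.single m 1 : Fin n → ℂ))) := by
  funext k
  rw [Finset.sum_apply]
  have key : ∀ m, ((x m).re • (Pi.single m 1 : Fin n → ℂ)
      + (x m).im • (Complex.I • (Pi.single m 1 : Fin n → ℂ))) k
        = if k = m then x m else 0 := by
    intro m
    by_cases hkm : k = m
    · subst hkm
      simp [Pi.single_apply, Complex.real_smul, Complex.ext_iff]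
    · simp [Pi.single_apply, hkm]
  rw [Finset.sum_congr rfl fun m _ => key m, Finset.sum_ite_eq]
  simp

/-- If the holomorphic gradient of a real quadratic form `Q` at `x` agrees with that of
`PhiH h`, then `Q x = PhiH h x`. -/
lemma key_eq (h : Matrix (Fin n) (Fin n) ℂ) (hherm : h.IsHermitian)
    (Q : QuadraticForm ℝ (Fin n → ℂ)) (x : Fin n → ℂ)
    (hgrad : holGrad (fun y => Q y) x = h.mulVec (star x)) :
    Q x = PhiH h x := by
  have hP : ∃ P : (Fin n → ℂ) →ₗ[ℝ] ℝ, ∀ v, P v = QuadraticMap.polar Q x v :=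
    ⟨{ toFun := fun v => QuadraticMap.polar Q x v
       map_add' := fun v w => QuadraticMap.polar_add_right Q x v w
       map_smul' := fun r v => by
         simpa using QuadraticMap.polar_smul_right (Q := Q) r x v }, fun v => rfl⟩
  obtain ⟨P, hPdef⟩ := hP
  set D : (Fin n → ℂ) →ₗ[ℝ] ℝ := P - B0lin h x with hDdef
  have hDapp : ∀ v, D v = QuadraticMap.polar Q x v - B0 h x v := by
    intro v
    rw [hDdef, LinearMap.sub_apply, hPdef]
    rfl
  have hbasis : ∀ m : Fin n, D (Pi.single m 1) = 0
      ∧ D (Complex.I • (Pi.single m 1 : Fin n → ℂ)) = 0 := by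
    intro m
    have hg := congrFun hgrad m
    unfold holGrad at hg
    dsimp only at hg
    have h2 : ((Q (x + Pi.single m 1) - Q x - Q (Pi.single m 1) : ℝ) : ℂ)
        - Complex.I * ((Q (x + Complex.I • (Pi.single m 1 : Fin n → ℂ)) - Q x
          - Q (Complex.I • (Pi.single m 1 : Fin n → ℂ)) : ℝ) : ℂ)
        = 2 * (h.mulVec (star x)) m := by
      linear_combination 2 * hg
    have hare : Q (x + Pi.single m 1) - Q x - Q (Pi.single m 1)
        = 2 * ((h.mulVec (star x)) m).re := by
      have := congrArg Complex.re h2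
      simpa [Complex.sub_re, Complex.mul_re] using this
    have hbim : Q (x + Complex.I • (Pi.single m 1 : Fin n → ℂ)) - Q x
        - Q (Complex.I • (Pi.single m 1 : Fin n → ℂ))
        = -2 * ((h.mulVec (star x)) m).im := by
      have him := congrArg Complex.im h2
      simp only [Complex.sub_im, Complex.mul_im, Complex.ofReal_im, Complex.ofReal_re,
        Complex.I_re, Complex.I_im, Complex.re_ofNat, Complex.im_ofNat] at him
      linarith [him]
    constructor
    · rw [hDapp, B0_single h hherm x m, QuadraticMap.polar]
      rw [hare]
      ring
    · rw [hDapp, B0_Ismul_single h hherm x m, QuadraticMap.polar]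
      rw [hbim]
      ring
  have hDx : D x = 0 := by
    conv_lhs => rw [decomp x]
    rw [map_sum]
    refine Finset.sum_eq_zero fun m _ => ?_
    rw [map_add, LinearMap.map_smul, LinearMap.map_smul, (hbasis m).1, (hbasis m).2]
    simp
  rw [hDapp] at hDx
  have hps : QuadraticMap.polar Q x x = 2 * Q x := by
    rw [QuadraticMap.polar_self, two_smul]; ring
  rw [hps, B0_self] at hDx
  linarith

/-- Proposition 3.2 of the paper.  With `Λ_{Φ₀} = {(x, (2/i)h x̄)}`, let `f`
be a holomorphic quadratic polynomial with quadratic part `f_q`, linear part `f_l`, and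
invertible mixed Hessian `F_{xz}`; let `κ_q` be the linear canonical transformation determined
by `κ_q(y, (2/i)hz) = (x, (2/i)(F_{xx}x + F_{xz}z))`, `x = (F_{xz}ᵀ)⁻¹(hᵀy - F_{zz}z)`, and
`m_l(x,ξ) = (2/i)(F_{xx}(F_{xz}ᵀ)⁻¹l_z - l_x)·x - ((F_{xz}ᵀ)⁻¹l_z)·ξ`.  Under conditions
(2.16)–(2.17) and the graph characterization of `κ_q(Λ_{Φ₀}) = Λ_{Φ₁}`, the imaginary part of
`m_l` vanishes on `Λ_{Φ₁} ∩ Λ_{Φ₀}`. -/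
theorem statement7
    (h : Matrix (Fin n) (Fin n) ℂ) (hpos : h.PosDef)
    (Fxx Fxz Fzz : Matrix (Fin n) (Fin n) ℂ) (hFxx : Fxx.IsSymm) (hFzz : Fzz.IsSymm)
    (hFxz : IsUnit Fxz)
    (lx lz : Fin n → ℂ) (f₀ : ℂ)
    (fq fl : (Fin n → ℂ) → (Fin n → ℂ) → ℂ)
    (hfq : ∀ x z, fq x z = (1 / 2 : ℂ) * ((Fxx.mulVec x) ⬝ᵥ x) + (Fxz.mulVec z) ⬝ᵥ x
      + (1 / 2 : ℂ) * ((Fzz.mulVec z) ⬝ᵥ z))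
    (hfl : ∀ x z, fl x z = lx ⬝ᵥ x + lz ⬝ᵥ z)
    (κq : ((Fin n → ℂ) × (Fin n → ℂ)) →ₗ[ℂ] ((Fin n → ℂ) × (Fin n → ℂ)))
    (hκ : ∀ y z : Fin n → ℂ,
      κq (y, (2 / Complex.I) • h.mulVec z)
        = ((Fxzᵀ)⁻¹.mulVec (hᵀ.mulVec y - Fzz.mulVec z),
            (2 / Complex.I) • (Fxx.mulVec ((Fxzᵀ)⁻¹.mulVec (hᵀ.mulVec y - Fzz.mulVec z))
              + Fxz.mulVec z)))
    (ml : (Fin n → ℂ) × (Fin n → ℂ) → ℂ)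
    (hml : ∀ p : (Fin n → ℂ) × (Fin n → ℂ),
      ml p = (2 / Complex.I) * ((Fxx.mulVec ((Fxzᵀ)⁻¹.mulVec lz) - lx) ⬝ᵥ p.1)
        - ((Fxzᵀ)⁻¹.mulVec lz) ⬝ᵥ p.2)
    (ha : ∀ x w : Fin n → ℂ, 2 * (fq x (star w)).re ≤ PhiH h x + PhiH h w)
    (hb : ∀ x w : Fin n → ℂ, 2 * (fq x (star w)).re = PhiH h x + PhiH h w →
      (fl x (star w)).re = 0)
    (Φ₁ : QuadraticForm ℝ (Fin n → ℂ))
    (hΦ₁psh : ∀ x : Fin n → ℂ, x ≠ 0 → 0 < (Φ₁ x + Φ₁ (Complex.I • x)) / 2)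
    (himage : (fun p => κq p) '' Lambda0 h = LambdaSet (fun y => Φ₁ y))
    (hgraph : ∀ x w : Fin n → ℂ,
      (x, (2 / Complex.I) • holGrad (fun y => Φ₁ y) x)
          = κq (w, (2 / Complex.I) • h.mulVec (star w)) ↔
        2 * (fq x (star w)).re = Φ₁ x + PhiH h w) :
    ∀ p ∈ LambdaSet (fun y => Φ₁ y) ∩ Lambda0 h, (ml p).im = 0 := by
  intro p hp
  obtain ⟨hp1, hp2⟩ := hp
  obtain ⟨x, hx⟩ := hp1
  obtain ⟨x', hx'⟩ := hp2
  have h2I : (2 / Complex.I : ℂ) ≠ 0 := by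
    simp [div_ne_zero_iff, Complex.I_ne_zero]
  -- identify the two descriptions of p
  have hxx' : x = x' ∧
      (2 / Complex.I) • holGrad (fun y => Φ₁ y) x = (2 / Complex.I) • h.mulVec (star x') := by
    have := hx.symm.trans hx'
    exact ⟨congrArg Prod.fst this, congrArg Prod.snd this⟩
  obtain ⟨hxeq, hsnd⟩ := hxx'
  subst hxeq
  have hgradx : holGrad (fun y => Φ₁ y) x = h.mulVec (star x) :=
    smul_right_injective (Fin n → ℂ) h2I hsnd
  have hQx : Φ₁ x = PhiH h x := key_eq h hpos.1 Φ₁ x hgradx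
  -- get the preimage point w on Λ₀
  have hpmem : p ∈ (fun p => κq p) '' Lambda0 h := by
    rw [himage]
    exact ⟨x, hx⟩
  obtain ⟨q, hq, hqp0⟩ := hpmem
  obtain ⟨w, hw⟩ := hq
  subst hw
  have hqp : κq (w, (2 / Complex.I) • h.mulVec (star w)) = p := hqp0
  -- graph condition
  have hfq_eq : 2 * (fq x (star w)).re = Φ₁ x + PhiH h w := by
    refine (hgraph x w).mp ?_
    rw [hqp, hx]
  have hfl0 : (fl x (star w)).re = 0 := by
    refine hb x w ?_
    rw [hfq_eq, hQx]
  -- explicit form of p via κq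
  have hκw := hκ w (star w)
  rw [hqp] at hκw
  have hp1' : p.1 = x := by rw [hx]
  have hX : (Fxzᵀ)⁻¹.mulVec (hᵀ.mulVec w - Fzz.mulVec (star w)) = x := by
    have := congrArg Prod.fst hκw
    simp only [hp1'] at this
    exact this.symm
  have hp2' : p.2 = (2 / Complex.I) • (Fxx.mulVec x + Fxz.mulVec (star w)) := by
    have := congrArg Prod.snd hκw
    rw [hX] at this
    exact this
  -- compute ml p
  have hFxzdet : IsUnit (Fxzᵀ).det := by
    rw [Matrix.det_transpose]
    exact (Matrix.isUnit_iff_isUnit_det Fxz).mp hFxz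
  have hinv : Fxzᵀ * (Fxzᵀ)⁻¹ = 1 := Matrix.mul_nonsing_inv _ hFxzdet
  have hsym : (Fxx.mulVec ((Fxzᵀ)⁻¹.mulVec lz)) ⬝ᵥ x
      = ((Fxzᵀ)⁻¹.mulVec lz) ⬝ᵥ (Fxx.mulVec x) := by
    rw [Matrix.dotProduct_mulVec ((Fxzᵀ)⁻¹.mulVec lz) Fxx x, ← Matrix.mulVec_transpose,
      hFxx.eq]
  have hFz : ((Fxzᵀ)⁻¹.mulVec lz) ⬝ᵥ (Fxz.mulVec (star w)) = lz ⬝ᵥ (star w) := by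
    rw [Matrix.dotProduct_mulVec, ← Matrix.mulVec_transpose, Matrix.mulVec_mulVec, hinv,
      Matrix.one_mulVec]
  have hmlp : ml p = 2 * Complex.I * fl x (star w) := by
    rw [hml, hfl, hp1', hp2', dotProduct_smul, smul_eq_mul, sub_dotProduct,
      dotProduct_add, hsym, hFz]
    have hIinv : (2 / Complex.I : ℂ) = -(2 * Complex.I) := by
      rw [div_eq_mul_inv, Complex.inv_I]
      ring
    rw [hIinv]
    ring
  rw [hmlp]
  have : (2 * Complex.I * fl x (star w)).im = 2 * (fl x (star w)).re := by
    simp [Complex.mul_im, Complex.mul_re]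
  rw [this, hfl0]
  ring

end BergerCoburn
end
end

section
/- Let h be a positive definite Hermitian n×n matrix. Let Q(y,θ) = ½ Q_{yy} y·y + Q_{yθ} θ·y + ½ Q_{θθ} θ·θ + a·y + b·θ be a holomorphic quadratic polynomial on ℂⁿ_y × ℂⁿ_θ (Q_{yy}, Q_{θθ} symmetric), with gradients Q'_y(y,θ) = Q_{yy}y + Q_{yθ}θ + a and Q'_θ(y,θ) = (Q_{yθ})ᵀy + Q_{θθ}θ + b. Assume both block matrices 𝒜 = [[2hᵀ − (Q_{yθ})ᵀ, −Q_{θθ}], [−Q_{yy}, 2h − Q_{yθ}]] and 𝒜̃ = [[4hᵀ − (Q_{yθ})ᵀ, −Q_{θθ}], [−Q_{yy}, 4h − Q_{yθ}]] are invertible. Define the subsets of ℂ²ⁿ × ℂ²ⁿ: κ := { ((y, (2/i) h θ − (1/i) Q'_y(y,θ)), (y − ½ (hᵀ)⁻¹ Q'_θ(y,θ), (2/i) h θ)) : (y,θ) ∈ ℂⁿ × ℂⁿ }, and κ̃ := { ((y, 2i h θ + 2ξ), (2x − y, −2i h θ)) : (x,ξ) ∈ ℂⁿ × ℂⁿ,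 where (y,θ) is the unique solution of Q'_y(y,θ) − 4hθ + 2iξ = 0 and Q'_θ(y,θ) − 4hᵀy + 4hᵀx = 0 }. Then κ = κ̃. -/
open Matrix Complex
open scoped ComplexOrder

noncomputable section

namespace BergerCoburn

variable {n : ℕ}

/-- Proposition 4.1 of the paper.  With `Q(y,θ)` a holomorphic quadratic
polynomial with gradients `Q'_y(y,θ) = Q_{yy}y + Q_{yθ}θ + a`,
`Q'_θ(y,θ) = Q_{yθ}ᵀy + Q_{θθ}θ + b`, and both block matrices `𝒜`, `𝒜̃` invertible, the
canonical relation `κ` generated by the FIO representation of the Toeplitz operator equals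
the canonical relation `κ̃` generated by its Weyl quantization. -/
theorem statement8
    (h Qyy Qtt Qyt : Matrix (Fin n) (Fin n) ℂ)
    (hpos : h.PosDef) (hQyy : Qyy.IsSymm) (hQtt : Qtt.IsSymm)
    (a b : Fin n → ℂ)
    (Qy' Qt' : (Fin n → ℂ) → (Fin n → ℂ) → Fin n → ℂ)
    (hQy' : ∀ y θ, Qy' y θ = Qyy.mulVec y + Qyt.mulVec θ + a)
    (hQt' : ∀ y θ, Qt' y θ = Qytᵀ.mulVec y + Qtt.mulVec θ + b)
    (hA : IsUnit (Matrix.fromBlocks ((2 : ℂ) • hᵀ - Qytᵀ) (-Qtt) (-Qyy)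
      ((2 : ℂ) • h - Qyt)))
    (hAt : IsUnit (Matrix.fromBlocks ((4 : ℂ) • hᵀ - Qytᵀ) (-Qtt) (-Qyy)
      ((4 : ℂ) • h - Qyt)))
    (κ κt : Set (((Fin n → ℂ) × (Fin n → ℂ)) × ((Fin n → ℂ) × (Fin n → ℂ))))
    (hκ : κ = {p | ∃ y θ : Fin n → ℂ,
      p = ((y, (2 / Complex.I) • h.mulVec θ - (1 / Complex.I) • Qy' y θ),
        (y - (1 / 2 : ℂ) • (hᵀ)⁻¹.mulVec (Qt' y θ), (2 / Complex.I) • h.mulVec θ))})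
    (hκt : κt = {p | ∃ x ξ y θ : Fin n → ℂ,
      Qy' y θ - (4 : ℂ) • h.mulVec θ + (2 * Complex.I) • ξ = 0 ∧
      Qt' y θ - (4 : ℂ) • hᵀ.mulVec y + (4 : ℂ) • hᵀ.mulVec x = 0 ∧
      p = ((y, (2 * Complex.I) • h.mulVec θ + (2 : ℂ) • ξ),
        ((2 : ℂ) • x - y, (-(2 * Complex.I)) • h.mulVec θ))}) :
    κ = κt := by
  have hdet : IsUnit hᵀ.det := by
    rw [Matrix.det_transpose]
    exact (Matrix.isUnit_iff_isUnit_det h).mp hpos.isUnit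
  have hinv' : hᵀ⁻¹ * hᵀ = 1 := Matrix.nonsing_inv_mul _ hdet
  have hinv : hᵀ * hᵀ⁻¹ = 1 := Matrix.mul_nonsing_inv _ hdet
  subst hκ hκt
  ext p
  simp only [Set.mem_setOf_eq]
  constructor
  · rintro ⟨y, θ, rfl⟩
    refine ⟨y - (4 : ℂ)⁻¹ • (hᵀ)⁻¹.mulVec (Qt' y θ),
      (-Complex.I / 2) • ((4 : ℂ) • h.mulVec θ - Qy' y θ), y, θ, ?_, ?_, ?_⟩
    · have hc : (2 * Complex.I) * (-Complex.I / 2) = 1 := by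
        linear_combination -Complex.I_sq
      rw [smul_smul, hc, one_smul]
      abel
    · rw [Matrix.mulVec_sub, Matrix.mulVec_smul, Matrix.mulVec_mulVec, hinv,
        Matrix.one_mulVec, smul_sub, smul_smul]
      norm_num
    · simp only [Prod.mk.injEq, Complex.div_I]
      refine ⟨⟨trivial, ?_⟩, ?_, ?_⟩
      · module
      · module
      · trivial
  · rintro ⟨x, ξ, y, θ, h1, h2, rfl⟩
    refine ⟨y, θ, ?_⟩
    have e1 : (2 : ℂ) • ξ = Complex.I • Qy' y θ - (4 * Complex.I) • h.mulVec θ := by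
      have h1' := congrArg (fun v => Complex.I • v) h1
      simp only [smul_add, smul_sub, smul_smul, smul_zero] at h1'
      have hc : Complex.I * (2 * Complex.I) = -2 := by linear_combination 2 * Complex.I_sq
      rw [hc] at h1'
      linear_combination (norm := module) (-1 : ℂ) • h1'
    have e2 : x - y = (-(4 : ℂ)⁻¹) • (hᵀ)⁻¹.mulVec (Qt' y θ) := by
      have h2' := congrArg (fun v => (4 : ℂ)⁻¹ • (hᵀ)⁻¹.mulVec v) h2
      simp only [Matrix.mulVec_add, Matrix.mulVec_sub, Matrix.mulVec_smul,
        Matrix.mulVec_mulVec, hinv', Matrix.one_mulVec, smul_zero, smul_add, smul_sub,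
        smul_smul] at h2'
      norm_num at h2'
      linear_combination (norm := module) h2'
    simp only [Prod.mk.injEq, Complex.div_I]
    refine ⟨⟨trivial, ?_⟩, ?_, ?_⟩
    · linear_combination (norm := module) e1
    · linear_combination (norm := module) (2 : ℂ) • e2
    · trivial

end BergerCoburn
end
end

section
/- Let h be a positive definite Hermitian n×n matrix, Φ₀(x) := Σ_{j,k} h_{jk} x_j x̄_k, and Ψ₀(x,y) := Σ_{j,k} h_{jk} x_j y_k. Let q be an inhomogeneous complex-valued quadratic polynomial on ℂⁿ whose principal part q₂ satisfies Re q₂(x) < Φ₀ʰᵉʳᵐ(x) = Φ₀(x) for all x ≠ 0. Then for every w ∈ ℂⁿ, the coherent state k_w(x) := exp(2Ψ₀(x,w̄) − Φ₀(w)) belongs to the maximal domain of Top(e^q); that is, ∫_{ℂⁿ} |e^{q(x)}|² · |e^{2Ψ₀(x,w̄)}|² · e^{−2Φ₀(x)} L(dx) < ∞. -/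
/-!
On the unit sphere the continuous function `Re q₂ - Φ₀` is negative, hence at most some `-ε`;
by 2-homogeneity `Re q₂ x - Φ₀ x ≤ -ε ‖x‖²` everywhere. The integrand equals
`exp (2 Re q + 4 Re Ψ₀(·, w̄) - 2 Φ₀)`, whose remaining terms grow at most linearly in `‖x‖`,
so it is dominated by a Gaussian `e^K e^{-ε ‖x‖²}`.
-/

open MeasureTheory Matrix Complex
open scoped ComplexOrder

noncomputable section

namespace BergerCoburn

variable {n : ℕ}

/-- The polarization `Ψ₀(x,y) = Σ_{j,k} h_{jk} x_j y_k` of `Φ₀`. -/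
def PsiH (h : Matrix (Fin n) (Fin n) ℂ) (x y : Fin n → ℂ) : ℂ :=
  ∑ j, ∑ k, h j k * x j * y k

end BergerCoburn

theorem QuadraticMap.continuous_of_finiteDimensional {E F : Type*} [NormedAddCommGroup E]
    [NormedSpace ℝ E] [FiniteDimensional ℝ E] [NormedAddCommGroup F] [NormedSpace ℝ F]
    (Q : QuadraticMap ℝ E F) : Continuous Q := by
  let B : E →ₗ[ℝ] E →L[ℝ] F :=
    LinearMap.toContinuousLinearMap.toLinearMap.comp (QuadraticMap.associatedHom ℝ Q)
  have hB : ∀ x, B x x = Q x := QuadraticMap.associated_eq_self_apply ℝ Q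
  have hcont : Continuous fun x => B x x := B.continuous_of_finiteDimensional.clm_apply continuous_id
  simpa only [hB] using hcont

theorem exists_pos_forall_le_neg_mul_norm_sq {E : Type*} [NormedAddCommGroup E]
    [NormedSpace ℝ E] [ProperSpace E] {g : E → ℝ} (hg : Continuous g)
    (hsmul : ∀ (t : ℝ) x, g (t • x) = t ^ 2 * g x) (hneg : ∀ x, x ≠ 0 → g x < 0) :
    ∃ ε > 0, ∀ x, g x ≤ -ε * ‖x‖ ^ 2 := by
  have hg0 : g 0 = 0 := by simpa using hsmul 0 0
  cases subsingleton_or_nontrivial E with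
  | inl _ => exact ⟨1, one_pos, fun x => by simp [Subsingleton.elim x 0, hg0]⟩
  | inr _ =>
    obtain ⟨x₀, hx₀, hmax⟩ := (isCompact_sphere (0 : E) 1).exists_isMaxOn
      (NormedSpace.sphere_nonempty.mpr zero_le_one) hg.continuousOn
    have hx₀ : x₀ ≠ 0 := ne_zero_of_mem_unit_sphere ⟨x₀, hx₀⟩
    refine ⟨-g x₀, neg_pos.mpr (hneg x₀ hx₀), fun x => ?_⟩
    rcases eq_or_ne x 0 with rfl | hx
    · simp [hg0]
    have hnorm : 0 < ‖x‖ := norm_pos_iff.mpr hx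
    have hu : ‖x‖⁻¹ • x ∈ Metric.sphere (0 : E) 1 := by
      simp [norm_smul, hnorm.ne']
    calc g x = ‖x‖ ^ 2 * g (‖x‖⁻¹ • x) := by
          rw [← hsmul, smul_smul, mul_inv_cancel₀ hnorm.ne', one_smul]
      _ ≤ ‖x‖ ^ 2 * g x₀ := by gcongr; exact hmax hu
      _ = -(-g x₀) * ‖x‖ ^ 2 := by ring

theorem mul_le_mul_sq_add_sq_div {a : ℝ} (ha : 0 < a) (b t : ℝ) :
    b * t ≤ a * t ^ 2 + b ^ 2 / (4 * a) := by
  have hsq : a * t ^ 2 + b ^ 2 / (4 * a) - b * t = (2 * a * t - b) ^ 2 / (4 * a) := by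
    field_simp
    ring
  linarith [hsq ▸ (by positivity : 0 ≤ (2 * a * t - b) ^ 2 / (4 * a))]

theorem integrable_exp_neg_mul_norm_sq_pi {ι : Type*} [Fintype ι] {ε : ℝ} (hε : 0 < ε) :
    Integrable (fun x : ι → ℂ => Real.exp (-ε * ‖x‖ ^ 2)) := by
  -- `‖x‖` is the sup norm, so `∑ ‖x i‖² ≤ card ι * ‖x‖²`; the `+ 1` keeps `c > 0` for empty `ι`.
  set c := ε / (Fintype.card ι + 1)
  have hc : 0 < c := by positivity
  have hgauss : Integrable (fun x : ι → ℂ => ∏ i, Real.exp (-c * ‖x i‖ ^ 2)) := by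
    refine Integrable.fintype_prod (f := fun _ (z : ℂ) => Real.exp (-c * ‖z‖ ^ 2)) fun _ => ?_
    have := GaussianFourier.integrable_cexp_neg_mul_sq_norm_add (V := ℂ) (b := (c : ℂ))
      (by simpa using hc) 0 0
    simpa [Complex.norm_exp, ← Complex.ofReal_pow] using this.norm
  refine hgauss.mono' (by fun_prop) (Filter.Eventually.of_forall fun x => ?_)
  have hsum : c * ∑ i, ‖x i‖ ^ 2 ≤ ε * ‖x‖ ^ 2 :=
    calc c * ∑ i, ‖x i‖ ^ 2 ≤ c * ∑ _i : ι, ‖x‖ ^ 2 := by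
          gcongr with i; exact norm_le_pi_norm x i
      _ = (Fintype.card ι / (Fintype.card ι + 1)) * ε * ‖x‖ ^ 2 := by
          simp only [Finset.sum_const, Finset.card_univ, nsmul_eq_mul, c]; ring
      _ ≤ 1 * ε * ‖x‖ ^ 2 := by
          gcongr; exact (div_le_one (by positivity)).mpr (by linarith)
      _ = ε * ‖x‖ ^ 2 := by rw [one_mul]
  rw [Real.norm_of_nonneg (Real.exp_nonneg _), ← Real.exp_sum]
  gcongr
  simpa [Finset.mul_sum] using hsum

theorem integrable_exp_of_le_neg_mul_norm_sq_pi {ι : Type*} [Fintype ι] {f : (ι → ℂ) → ℝ}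
    (hf : Continuous f) {ε K : ℝ} (hε : 0 < ε) (hle : ∀ x, f x ≤ -ε * ‖x‖ ^ 2 + K) :
    Integrable (fun x => Real.exp (f x)) := by
  refine ((integrable_exp_neg_mul_norm_sq_pi hε).const_mul (Real.exp K)).mono' (by fun_prop)
    (Filter.Eventually.of_forall fun x => ?_)
  rw [Real.norm_of_nonneg (Real.exp_nonneg _), ← Real.exp_add, add_comm]
  exact Real.exp_le_exp.mpr (hle x)

namespace BergerCoburn

theorem phiH_smul (h : Matrix (Fin n) (Fin n) ℂ) (t : ℝ) (x : Fin n → ℂ) :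
    PhiH h (t • x) = t ^ 2 * PhiH h x := by
  have hterm : ∀ j k, h j k * (t • x) j * star ((t • x) k)
      = ((t : ℂ) ^ 2) * (h j k * x j * star (x k)) := by
    intro j k
    simp only [Pi.smul_apply, Complex.real_smul, star_mul', Complex.star_def, Complex.conj_ofReal]
    ring
  simp_rw [PhiH, hterm, ← Finset.mul_sum, ← Complex.ofReal_pow, Complex.re_ofReal_mul]

theorem continuous_phiH (h : Matrix (Fin n) (Fin n) ℂ) : Continuous (PhiH h) := by
  unfold PhiH; fun_prop

theorem continuous_psiH_left (h : Matrix (Fin n) (Fin n) ℂ) (y : Fin n → ℂ) :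
    Continuous fun x => PsiH h x y := by
  unfold PsiH; fun_prop

theorem norm_psiH_le (h : Matrix (Fin n) (Fin n) ℂ) (x y : Fin n → ℂ) :
    ‖PsiH h x y‖ ≤ (∑ j, ∑ k, ‖h j k‖ * ‖y k‖) * ‖x‖ :=
  calc ‖PsiH h x y‖ ≤ ∑ j, ∑ k, ‖h j k * x j * y k‖ :=
        (norm_sum_le _ _).trans (Finset.sum_le_sum fun j _ => norm_sum_le _ _)
    _ ≤ ∑ j, ∑ k, ‖h j k‖ * ‖y k‖ * ‖x‖ := by
        gcongr with j _ k _
        rw [norm_mul, norm_mul, mul_right_comm]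
        gcongr
        exact norm_le_pi_norm x j
    _ = (∑ j, ∑ k, ‖h j k‖ * ‖y k‖) * ‖x‖ := by simp only [Finset.sum_mul]

theorem exists_exponent_le_neg_mul_norm_sq (h : Matrix (Fin n) (Fin n) ℂ)
    (q₂ : QuadraticMap ℝ (Fin n → ℂ) ℂ) (q₁ : (Fin n → ℂ) →ₗ[ℝ] ℂ) (q₀ : ℂ)
    (hq₂ : ∀ x, x ≠ 0 → (q₂ x).re < PhiH h x) (y : Fin n → ℂ) :
    ∃ ε > 0, ∃ K, ∀ x, 2 * (q₂ x + q₁ x + q₀).re + 4 * (PsiH h x y).re - 2 * PhiH h x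
      ≤ -ε * ‖x‖ ^ 2 + K := by
  obtain ⟨ε, hε, hquad⟩ := exists_pos_forall_le_neg_mul_norm_sq (g := fun x => (q₂ x).re - PhiH h x)
    ((continuous_re.comp q₂.continuous_of_finiteDimensional).sub (continuous_phiH h))
    (fun t x => by simp only [QuadraticMap.map_smul, phiH_smul, smul_re, smul_eq_mul]; ring)
    (fun x hx => sub_neg.mpr (hq₂ x hx))
  set C₁ := ‖LinearMap.toContinuousLinearMap q₁‖
  set Cy := ∑ j, ∑ k, ‖h j k‖ * ‖y k‖
  set C := 2 * C₁ + 4 * Cy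
  refine ⟨ε, hε, C ^ 2 / (4 * ε) + 2 * q₀.re, fun x => ?_⟩
  have hq₁ : (q₁ x).re ≤ C₁ * ‖x‖ :=
    (re_le_norm _).trans ((LinearMap.toContinuousLinearMap q₁).le_opNorm x)
  have hpsi : (PsiH h x y).re ≤ Cy * ‖x‖ := (re_le_norm _).trans (norm_psiH_le h x y)
  have hlin := mul_le_mul_sq_add_sq_div hε C ‖x‖
  simp only [add_re]
  linarith [hquad x]

theorem statement9_general
    (h : Matrix (Fin n) (Fin n) ℂ)
    (q₂ : QuadraticMap ℝ (Fin n → ℂ) ℂ) (q₁ : (Fin n → ℂ) →ₗ[ℝ] ℂ) (q₀ : ℂ)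
    (q : (Fin n → ℂ) → ℂ) (hq : ∀ x, q x = q₂ x + q₁ x + q₀)
    (h1 : ∀ x : Fin n → ℂ, x ≠ 0 → (q₂ x).re < PhiH h x) :
    ∀ w : Fin n → ℂ,
      Integrable (fun x => ‖Complex.exp (q x)‖ ^ 2
        * ‖Complex.exp (2 * PsiH h x (star w))‖ ^ 2 * Real.exp (-2 * PhiH h x)) := by
  intro w
  obtain rfl : q = fun x => q₂ x + q₁ x + q₀ := funext hq
  obtain ⟨ε, hε, K, hle⟩ := exists_exponent_le_neg_mul_norm_sq h q₂ q₁ q₀ h1 (star w)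
  have hcont : Continuous fun x =>
      2 * (q₂ x + q₁ x + q₀).re + 4 * (PsiH h x (star w)).re - 2 * PhiH h x := by
    have := q₂.continuous_of_finiteDimensional
    have := q₁.continuous_of_finiteDimensional
    have := continuous_psiH_left h (star w)
    have := continuous_phiH h
    fun_prop
  refine (integrable_exp_of_le_neg_mul_norm_sq_pi hcont hε hle).congr
    (Filter.Eventually.of_forall fun x => ?_)
  simp only [norm_exp, ← Real.exp_nat_mul, ← Real.exp_add, Nat.cast_ofNat, mul_re, re_ofNat,
    im_ofNat, zero_mul, sub_zero]
  ring_nf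

/-- (2.13) of the paper.  Let `h` be positive definite Hermitian,
`Φ₀(x) = Σ h_{jk}x_jx̄_k`, `Ψ₀(x,y) = Σ h_{jk}x_jy_k`, and let `q = q₂ + q₁ + q₀` be an
inhomogeneous quadratic polynomial with `Re q₂(x) < Φ₀(x)` for `x ≠ 0`.  Then for every
`w ∈ ℂⁿ` the coherent state `k_w(x) = exp(2Ψ₀(x,w̄) - Φ₀(w))` lies in the maximal domain of
`Top(e^q)`, i.e. `∫ |e^{q}|²|e^{2Ψ₀(·,w̄)}|² e^{-2Φ₀} L(dx) < ∞`. -/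
theorem statement9
    (h : Matrix (Fin n) (Fin n) ℂ) (hpos : h.PosDef)
    (q₂ : QuadraticMap ℝ (Fin n → ℂ) ℂ) (q₁ : (Fin n → ℂ) →ₗ[ℝ] ℂ) (q₀ : ℂ)
    (q : (Fin n → ℂ) → ℂ) (hq : ∀ x, q x = q₂ x + q₁ x + q₀)
    (h1 : ∀ x : Fin n → ℂ, x ≠ 0 → (q₂ x).re < PhiH h x) :
    ∀ w : Fin n → ℂ,
      Integrable (fun x => ‖Complex.exp (q x)‖ ^ 2
        * ‖Complex.exp (2 * PsiH h x (star w))‖ ^ 2 * Real.exp (-2 * PhiH h x)) :=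
  statement9_general h q₂ q₁ q₀ q hq h1

end BergerCoburn
end
end

section
/- Let h be a positive definite Hermitian n×n matrix and Φ₀(x) := Σ_{j,k} h_{jk} x_j x̄_k. Let f(x,z) = f_q(x,z) + f_l(x,z) + f₀ be a holomorphic quadratic polynomial on ℂⁿ × ℂⁿ with quadratic part f_q, linear part f_l and constant term f₀. Assume: (i) 2 Re f_q(x,w̄) ≤ Φ₀(x) + Φ₀(w) for all x, w ∈ ℂⁿ; (ii) whenever 2 Re f_q(x,w̄) = Φ₀(x) + Φ₀(w), one has Re f_l(x,w̄) = 0; (iii) 2 Re f_q(x,0) < Φ₀(x) for all x ≠ 0; (iv) sup_{x∈ℂⁿ} (2 Re f(x,w̄) − Φ₀(x)) − Φ₀(w) → −∞ as |w| → ∞ (the supremum is finite for each w by (i)–(iii)). Then the strict inequality 2 Re f_q(x,w̄) < Φ₀(x) + Φ₀(w) holds for every (x,w) ≠ (0,0). -/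
open Matrix Complex
open scoped ComplexOrder

noncomputable section

namespace BergerCoburn

variable {n : ℕ}

/-- The Euclidean norm `|x| = (Σ|x_j|²)^{1/2}` on `ℂⁿ`. -/
def euclNorm (x : Fin n → ℂ) : ℝ :=
  Real.sqrt (∑ j, Complex.normSq (x j))

/-- inequality (5.6) of the paper.  Let `h` be positive definite Hermitian,
`Φ₀(x) = Σ h_{jk}x_jx̄_k`, and `f = f_q + f_l + f₀` a holomorphic quadratic polynomial on
`ℂⁿ × ℂⁿ` satisfying (i) `2Re f_q(x,w̄) ≤ Φ₀(x)+Φ₀(w)`; (ii) `Re f_l(x,w̄) = 0` on the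
equality set of (i); (iii) `2Re f_q(x,0) < Φ₀(x)` for `x ≠ 0`; and (iv)
`sup_x(2Re f(x,w̄) - Φ₀(x)) - Φ₀(w) → -∞` as `|w| → ∞`.  Then
`2Re f_q(x,w̄) < Φ₀(x) + Φ₀(w)` for every `(x,w) ≠ (0,0)`. -/
theorem statement11
    (h : Matrix (Fin n) (Fin n) ℂ) (hpos : h.PosDef)
    (Fxx Fxz Fzz : Matrix (Fin n) (Fin n) ℂ) (hFxx : Fxx.IsSymm) (hFzz : Fzz.IsSymm)
    (lx lz : Fin n → ℂ) (f₀ : ℂ)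
    (f fq fl : (Fin n → ℂ) → (Fin n → ℂ) → ℂ)
    (hfq : ∀ x z, fq x z = (1 / 2 : ℂ) * ((Fxx.mulVec x) ⬝ᵥ x) + (Fxz.mulVec z) ⬝ᵥ x
      + (1 / 2 : ℂ) * ((Fzz.mulVec z) ⬝ᵥ z))
    (hfl : ∀ x z, fl x z = lx ⬝ᵥ x + lz ⬝ᵥ z)
    (hf : ∀ x z, f x z = fq x z + fl x z + f₀)
    (hi : ∀ x w : Fin n → ℂ, 2 * (fq x (star w)).re ≤ PhiH h x + PhiH h w)
    (hii : ∀ x w : Fin n → ℂ, 2 * (fq x (star w)).re = PhiH h x + PhiH h w →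
      (fl x (star w)).re = 0)
    (hiii : ∀ x : Fin n → ℂ, x ≠ 0 → 2 * (fq x 0).re < PhiH h x)
    (hiv : ∀ M : ℝ, ∃ R : ℝ, ∀ w : Fin n → ℂ, R ≤ euclNorm w →
      sSup {t : ℝ | ∃ x : Fin n → ℂ, t = 2 * (f x (star w)).re - PhiH h x} - PhiH h w ≤ M) :
    ∀ x w : Fin n → ℂ, (x, w) ≠ (0, 0) →
      2 * (fq x (star w)).re < PhiH h x + PhiH h w := by
  classical
  -- basic facts
  have hPhi_zero : PhiH h (0 : Fin n → ℂ) = 0 := by simp [PhiH]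
  have hPhi_smul : ∀ (r : ℝ) (x : Fin n → ℂ), PhiH h ((r:ℂ) • x) = r^2 * PhiH h x := by
    intro r x
    have hterm : ∀ j k : Fin n, h j k * ((r:ℂ) • x) j * star (((r:ℂ) • x) k)
        = ((r^2:ℝ):ℂ) * (h j k * x j * star (x k)) := by
      intro j k
      simp only [Pi.smul_apply, smul_eq_mul, star_mul', Complex.star_def, Complex.conj_ofReal]
      push_cast; ring
    simp only [PhiH, hterm, ← Finset.mul_sum]
    rw [Complex.re_ofReal_mul]
  have hfq_smul : ∀ (c : ℂ) (x z : Fin n → ℂ), fq (c • x) (c • z) = c^2 * fq x z := by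
    intro c x z
    simp only [hfq, Matrix.mulVec_smul, smul_dotProduct, dotProduct_smul, smul_eq_mul]
    ring
  have hfl_smul : ∀ (c : ℂ) (x z : Fin n → ℂ), fl (c • x) (c • z) = c * fl x z := by
    intro c x z
    simp only [hfl, dotProduct_smul, smul_eq_mul]
    ring
  have hstar_smul : ∀ (r : ℝ) (w : Fin n → ℂ), star ((r:ℂ) • w) = (r:ℂ) • star w := by
    intro r w
    ext j
    simp [Complex.star_def, Complex.conj_ofReal]
  -- the quadratic part in x only
  set Q : (Fin n → ℂ) → ℝ := fun x => 2 * (fq x 0).re - PhiH h x with hQdef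
  have hQ_neg : ∀ x : Fin n → ℂ, x ≠ 0 → Q x < 0 := by
    intro x hx
    have := hiii x hx
    simp only [hQdef]
    linarith
  have hQ_zero : Q 0 = 0 := by
    simp [hQdef, hfq, hPhi_zero]
  have hQ_smul : ∀ (r : ℝ) (x : Fin n → ℂ), Q ((r:ℂ) • x) = r^2 * Q x := by
    intro r x
    have h1 : fq ((r:ℂ) • x) 0 = (r:ℂ)^2 * fq x 0 := by
      have := hfq_smul (r:ℂ) x 0
      rwa [smul_zero] at this
    have h2 : ((r:ℂ))^2 = ((r^2:ℝ):ℂ) := by push_cast; ring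
    simp only [hQdef, h1, h2, Complex.re_ofReal_mul, hPhi_smul]
    ring
  have hQ_cont : Continuous Q := by
    have he : Q = fun x : Fin n → ℂ =>
        2 * ((1/2 : ℂ) * (∑ i, (∑ j, Fxx i j * x j) * x i)).re
          - (∑ j, ∑ k, h j k * x j * star (x k)).re := by
      funext x
      simp [hQdef, hfq, PhiH, Matrix.mulVec, dotProduct, mul_comm]
    rw [he]
    fun_prop
  -- the coercivity constant
  obtain ⟨δ, hδpos, hδ⟩ : ∃ δ : ℝ, 0 < δ ∧ ∀ x : Fin n → ℂ, Q x ≤ -δ * ‖x‖^2 := by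
    by_cases hn : ∃ x : Fin n → ℂ, x ≠ 0
    · obtain ⟨x₁, hx₁⟩ := hn
      have hx₁n : (0:ℝ) < ‖x₁‖ := norm_pos_iff.mpr hx₁
      have hsph : (Metric.sphere (0 : Fin n → ℂ) 1).Nonempty := by
        refine ⟨((‖x₁‖⁻¹ : ℝ) : ℂ) • x₁, ?_⟩
        rw [mem_sphere_zero_iff_norm, norm_smul]
        simp [abs_of_pos (inv_pos.mpr hx₁n), inv_mul_cancel₀ (ne_of_gt hx₁n)]
      obtain ⟨m, hm, hmax⟩ := (isCompact_sphere (0 : Fin n → ℂ) 1).exists_isMaxOn hsph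
        hQ_cont.continuousOn
      have hm1 : ‖m‖ = 1 := mem_sphere_zero_iff_norm.mp hm
      have hm0 : m ≠ 0 := by
        intro h0; rw [h0, norm_zero] at hm1; norm_num at hm1
      refine ⟨-Q m, by linarith [hQ_neg m hm0], ?_⟩
      intro x
      rcases eq_or_ne x 0 with rfl | hx
      · simp [hQ_zero]
      · have hnx : (0:ℝ) < ‖x‖ := norm_pos_iff.mpr hx
        have hy : ((‖x‖⁻¹ : ℝ) : ℂ) • x ∈ Metric.sphere (0 : Fin n → ℂ) 1 := by
          rw [mem_sphere_zero_iff_norm, norm_smul]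
          simp [abs_of_pos (inv_pos.mpr hnx), inv_mul_cancel₀ (ne_of_gt hnx)]
        have h1 : Q (((‖x‖⁻¹ : ℝ) : ℂ) • x) ≤ Q m := hmax hy
        rw [hQ_smul] at h1
        have h2 : (‖x‖⁻¹)^2 = (‖x‖^2)⁻¹ := by rw [inv_pow]
        rw [h2] at h1
        have h3 : (0:ℝ) < ‖x‖^2 := by positivity
        calc Q x = ‖x‖^2 * ((‖x‖^2)⁻¹ * Q x) := by field_simp
          _ ≤ ‖x‖^2 * Q m := by
              apply mul_le_mul_of_nonneg_left h1 (le_of_lt h3)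
          _ = -(-Q m) * ‖x‖^2 := by ring
    · push_neg at hn
      refine ⟨1, one_pos, ?_⟩
      intro x
      rw [hn x]
      simp [hQ_zero]
  -- boundedness above of the sup sets
  have hbdd : ∀ w : Fin n → ℂ,
      BddAbove {t : ℝ | ∃ x : Fin n → ℂ, t = 2 * (f x (star w)).re - PhiH h x} := by
    intro w
    set u : Fin n → ℂ := Fxz.mulVec (star w) + lx with hu
    set A : ℝ := ∑ j, ‖u j‖ with hA
    have hA0 : 0 ≤ A := Finset.sum_nonneg fun j _ => norm_nonneg _
    set C : ℝ := (Fzz.mulVec (star w) ⬝ᵥ star w).re + 2 * (lz ⬝ᵥ star w).re + 2 * f₀.re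
      with hC
    refine ⟨A^2 / δ + C, ?_⟩
    rintro t ⟨x, rfl⟩
    have e1 : f x (star w) = fq x 0 + u ⬝ᵥ x
        + ((1/2 : ℂ) * (Fzz.mulVec (star w) ⬝ᵥ star w) + lz ⬝ᵥ star w + f₀) := by
      rw [hf, hfq, hfl, hfq, hu]
      simp only [add_dotProduct, Matrix.mulVec_zero, zero_dotProduct, dotProduct_zero]
      ring
    have e2 : 2 * (f x (star w)).re - PhiH h x = Q x + 2 * (u ⬝ᵥ x).re + C := by
      rw [e1]
      simp only [Complex.add_re, Complex.mul_re, hQdef, hC]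
      norm_num
      ring
    have e3 : (u ⬝ᵥ x).re ≤ A * ‖x‖ := by
      calc (u ⬝ᵥ x).re ≤ ‖u ⬝ᵥ x‖ := Complex.re_le_norm _
        _ = ‖∑ j, u j * x j‖ := rfl
        _ ≤ ∑ j, ‖u j * x j‖ := norm_sum_le _ _
        _ ≤ ∑ j, ‖u j‖ * ‖x‖ := by
            apply Finset.sum_le_sum
            intro j _
            rw [norm_mul]
            exact mul_le_mul_of_nonneg_left (norm_le_pi_norm x j) (norm_nonneg _)
        _ = A * ‖x‖ := by rw [hA, Finset.sum_mul]
    have e4 : Q x ≤ -δ * ‖x‖^2 := hδ x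
    have e5 : -δ * ‖x‖^2 + 2 * (A * ‖x‖) ≤ A^2 / δ := by
      rw [le_div_iff₀ hδpos]
      nlinarith [sq_nonneg (δ * ‖x‖ - A)]
    linarith
  -- main argument by contradiction
  by_contra hcon
  push_neg at hcon
  obtain ⟨x₀, w₀, hne, hge⟩ := hcon
  have heq : 2 * (fq x₀ (star w₀)).re = PhiH h x₀ + PhiH h w₀ := le_antisymm (hi x₀ w₀) hge
  have hw₀ : w₀ ≠ 0 := by
    rintro rfl
    have hx₀ : x₀ ≠ 0 := by
      intro h0
      exact hne (by rw [h0])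
    have h1 := hiii x₀ hx₀
    rw [star_zero, hPhi_zero] at heq
    linarith
  have heNorm : 0 < euclNorm w₀ := by
    rw [euclNorm]
    apply Real.sqrt_pos.mpr
    obtain ⟨j, hj⟩ : ∃ j, w₀ j ≠ 0 := by
      by_contra hc
      push_neg at hc
      exact hw₀ (funext hc)
    have hjpos : 0 < Complex.normSq (w₀ j) := Complex.normSq_pos.mpr hj
    have := Finset.sum_nonneg (fun k (_ : k ∈ Finset.univ) => Complex.normSq_nonneg (w₀ k))
    calc (0:ℝ) < Complex.normSq (w₀ j) := hjpos
      _ ≤ ∑ k, Complex.normSq (w₀ k) :=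
        Finset.single_le_sum (fun k _ => Complex.normSq_nonneg (w₀ k)) (Finset.mem_univ j)
  have heucl_smul : ∀ (r : ℝ), 0 ≤ r → euclNorm ((r:ℂ) • w₀) = r * euclNorm w₀ := by
    intro r hr
    simp only [euclNorm, Pi.smul_apply, smul_eq_mul, Complex.normSq_mul,
      Complex.normSq_ofReal, ← Finset.mul_sum]
    rw [show r * r = r^2 by ring, Real.sqrt_mul (sq_nonneg r), Real.sqrt_sq hr]
  obtain ⟨R, hR⟩ := hiv (2 * f₀.re - 1)
  set lam : ℝ := max 1 (R / euclNorm w₀) with hlam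
  have hlam_pos : (0:ℝ) < lam := lt_of_lt_of_le one_pos (le_max_left _ _)
  have hlamR : R ≤ euclNorm ((lam:ℂ) • w₀) := by
    rw [heucl_smul lam (le_of_lt hlam_pos)]
    have h1 : R / euclNorm w₀ ≤ lam := le_max_right _ _
    calc R = (R / euclNorm w₀) * euclNorm w₀ := by field_simp
      _ ≤ lam * euclNorm w₀ := mul_le_mul_of_nonneg_right h1 (le_of_lt heNorm)
  -- equality at scaled point
  have hc2 : ((lam:ℂ))^2 = ((lam^2:ℝ):ℂ) := by push_cast; ring
  have heq2 : 2 * (fq ((lam:ℂ) • x₀) (star ((lam:ℂ) • w₀))).re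
      = PhiH h ((lam:ℂ) • x₀) + PhiH h ((lam:ℂ) • w₀) := by
    rw [hstar_smul, hfq_smul, hPhi_smul, hPhi_smul, hc2, Complex.re_ofReal_mul]
    nlinarith [heq]
  have hfl0 : (fl ((lam:ℂ) • x₀) (star ((lam:ℂ) • w₀))).re = 0 := hii _ _ heq2
  -- the value at scaled point
  have ht : 2 * (f ((lam:ℂ) • x₀) (star ((lam:ℂ) • w₀))).re - PhiH h ((lam:ℂ) • x₀)
      = PhiH h ((lam:ℂ) • w₀) + 2 * f₀.re := by
    have hre : (f ((lam:ℂ) • x₀) (star ((lam:ℂ) • w₀))).re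
        = (fq ((lam:ℂ) • x₀) (star ((lam:ℂ) • w₀))).re
          + (fl ((lam:ℂ) • x₀) (star ((lam:ℂ) • w₀))).re + f₀.re := by
      rw [hf]; simp [Complex.add_re]
    rw [hre, hfl0]
    linarith [heq2]
  have hmem : PhiH h ((lam:ℂ) • w₀) + 2 * f₀.re ∈
      {t : ℝ | ∃ x : Fin n → ℂ, t = 2 * (f x (star ((lam:ℂ) • w₀))).re - PhiH h x} :=
    ⟨(lam:ℂ) • x₀, ht.symm⟩
  have hsup := le_csSup (hbdd ((lam:ℂ) • w₀)) hmem
  have hfin := hR ((lam:ℂ) • w₀) hlamR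
  linarith

end BergerCoburn
end
end

section
/- Let γ ∈ ℂ \ {0} and let A be a complex symmetric n×n matrix. Define the linear map κ_q : ℂ²ⁿ → ℂ²ⁿ by κ_q(y,η) = (y/γ − 8iγAη, γη), and let Λ₀ := {(y, ȳ/(2i)) : y ∈ ℂⁿ} ⊂ ℂ²ⁿ. Then κ_q(Λ₀) ∩ Λ₀ = { (y, ȳ/(2i)) : y ∈ ℂⁿ, (1−|γ|²) y = 4|γ|² A ȳ }. -/
/-!
A point `(u, ū/(2i))` of `Λ₀` is sent by `κ_q` to a point `(w, w̄/(2i))` of `Λ₀` exactly when the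
second components match, `w̄ = γ ū`, i.e. `u = w / γ̄`, and the first components match; after this
substitution the latter reads `w = w / |γ|² - 4 A w̄`, which is the stated relation multiplied
by `|γ|²`.
-/

open Matrix Complex

noncomputable section

namespace BergerCoburn

variable {n : ℕ}

theorem star_eq_smul_star_iff {M : Type*} [AddCommGroup M] [Module ℂ M] [StarAddMonoid M]
    [StarModule ℂ M] {γ : ℂ} (hγ : γ ≠ 0) (u w : M) :
    star w = γ • star u ↔ u = (star γ)⁻¹ • w := by
  rw [eq_inv_smul_iff₀ (star_ne_zero.mpr hγ), ← star_inj, star_smul, star_star, star_star,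
    eq_comm]

theorem inv_smul_sub_mulVec_eq_iff {ι : Type*} [Fintype ι] {r : ℂ} (hr : r ≠ 0)
    (A : Matrix ι ι ℂ) (w v : ι → ℂ) :
    r⁻¹ • w - (4 : ℂ) • A *ᵥ v = w ↔ ((1 : ℂ) - r) • w = (4 * r) • A *ᵥ v := by
  simp only [funext_iff, Pi.sub_apply, Pi.smul_apply, smul_eq_mul]
  refine forall_congr' fun i => ?_
  constructor <;> intro h
  · field_simp at h
    linear_combination h
  · field_simp
    linear_combination h

theorem kappa_lagrangian_eq_lagrangian_iff {ι : Type*} [Fintype ι] {γ : ℂ} (hγ : γ ≠ 0)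
    (A : Matrix ι ι ℂ) (u w : ι → ℂ) :
    (γ⁻¹ • u - (8 * I * γ) • A *ᵥ ((2 * I)⁻¹ • star u), γ • (2 * I)⁻¹ • star u)
        = (w, (2 * I)⁻¹ • star w) ↔
      u = (star γ)⁻¹ • w ∧ ((1 : ℂ) - (‖γ‖ : ℂ) ^ 2) • w = (4 * (‖γ‖ : ℂ) ^ 2) • A *ᵥ star w := by
  rw [Prod.mk.injEq, smul_comm, smul_right_inj (by simp), eq_comm (a := γ • star u),
    star_eq_smul_star_iff hγ, and_comm]
  refine and_congr_right fun hu => ?_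
  have hcoef : 8 * I * γ * (2 * I)⁻¹ * γ⁻¹ = 4 := by
    field_simp
    ring
  rw [hu, star_smul, star_inv₀, star_star, mulVec_smul, mulVec_smul, smul_smul, smul_smul,
    smul_smul, hcoef, ← mul_inv, ← mul_conj']
  exact inv_smul_sub_mulVec_eq_iff (by simpa using hγ) A w (star w)

theorem statement15_general
    (γ : ℂ) (hγ : γ ≠ 0)
    (A : Matrix (Fin n) (Fin n) ℂ)
    (κq : (Fin n → ℂ) × (Fin n → ℂ) → (Fin n → ℂ) × (Fin n → ℂ))
    (hκq : ∀ y η : Fin n → ℂ,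
      κq (y, η) = (γ⁻¹ • y - (8 * Complex.I * γ) • A.mulVec η, γ • η))
    (Λ₀ : Set ((Fin n → ℂ) × (Fin n → ℂ)))
    (hΛ₀ : Λ₀ = {p | ∃ y : Fin n → ℂ, p = (y, (2 * Complex.I)⁻¹ • star y)}) :
    (κq '' Λ₀) ∩ Λ₀ =
      {p | ∃ y : Fin n → ℂ,
        ((1 : ℂ) - ((‖γ‖ : ℂ)) ^ 2) • y
            = ((4 : ℂ) * ((‖γ‖ : ℂ)) ^ 2) • A.mulVec (star y) ∧
        p = (y, (2 * Complex.I)⁻¹ • star y)} := by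
  subst hΛ₀
  ext p
  simp only [Set.mem_inter_iff, Set.mem_image, Set.mem_ofPred_eq]
  constructor
  · rintro ⟨⟨_, ⟨u, rfl⟩, hu⟩, w, rfl⟩
    rw [hκq, kappa_lagrangian_eq_lagrangian_iff hγ] at hu
    exact ⟨w, hu.2, rfl⟩
  · rintro ⟨w, hw, rfl⟩
    refine ⟨⟨_, ⟨(star γ)⁻¹ • w, rfl⟩, ?_⟩, w, rfl⟩
    rw [hκq, kappa_lagrangian_eq_lagrangian_iff hγ]
    exact ⟨rfl, hw⟩

/-- the intersection computation (6.8)–(6.10) of the paper.  For `γ ≠ 0`,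
`A` complex symmetric, `κ_q(y,η) = (y/γ - 8iγAη, γη)` and
`Λ₀ = {(y, ȳ/(2i))}`, one has
`κ_q(Λ₀) ∩ Λ₀ = {(y, ȳ/(2i)) : (1-|γ|²)y = 4|γ|² A ȳ}`. -/
theorem statement15
    (γ : ℂ) (hγ : γ ≠ 0)
    (A : Matrix (Fin n) (Fin n) ℂ) (hA : A.IsSymm)
    (κq : (Fin n → ℂ) × (Fin n → ℂ) → (Fin n → ℂ) × (Fin n → ℂ))
    (hκq : ∀ y η : Fin n → ℂ,
      κq (y, η) = (γ⁻¹ • y - (8 * Complex.I * γ) • A.mulVec η, γ • η))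
    (Λ₀ : Set ((Fin n → ℂ) × (Fin n → ℂ)))
    (hΛ₀ : Λ₀ = {p | ∃ y : Fin n → ℂ, p = (y, (2 * Complex.I)⁻¹ • star y)}) :
    (κq '' Λ₀) ∩ Λ₀ =
      {p | ∃ y : Fin n → ℂ,
        ((1 : ℂ) - ((‖γ‖ : ℂ)) ^ 2) • y
            = ((4 : ℂ) * ((‖γ‖ : ℂ)) ^ 2) • A.mulVec (star y) ∧
        p = (y, (2 * Complex.I)⁻¹ • star y)} :=
  statement15_general γ hγ A κq hκq Λ₀ hΛ₀

end BergerCoburn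
end
end

section
/- Let γ ∈ ℂ \ {0} with |γ| < 1, let θ ∈ [0, 2π), set μ := ((1−|γ|²)/(4|γ|²)) e^{iθ} (so μ ≠ 0), and let c, d ∈ ℂⁿ. Then the condition 'Re(γ c̄·y + (4γμ c̄ − d)·ȳ) = 0 for every y ∈ ℂⁿ satisfying (1−|γ|²) y = 4|γ|² μ ȳ' holds if and only if every component of the vector i e^{−iθ/2}(γ̄ c + 4γμ c̄ − d) is real. -/
open Matrix Complex Real

noncomputable section

namespace BergerCoburn

variable {n : ℕ}

/-! Since `4|γ|²μ = (1 - |γ|²) e^{iθ}` with `1 - |γ|² ≠ 0`, the constraint reads `y = e^{iθ} ȳ`,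
i.e. `y = e^{iθ/2} t` with `t ∈ ℝⁿ`. On such `y` the functional has real part
`∑ₖ Re(γ c̄ₖ e^{iθ/2} + (4γμ c̄ₖ - dₖ) e^{-iθ/2}) tₖ`, which vanishes for all real `t` iff every
coefficient does, and the `k`-th coefficient is the imaginary part of the `k`-th component of
`i e^{-iθ/2}(γ̄ c + 4γμ c̄ - d)`. -/

open ComplexConjugate

theorem eq_sq_mul_conj_iff {E z : ℂ} (hE : ‖E‖ = 1) :
    z = E ^ 2 * conj z ↔ ∃ t : ℝ, z = E * t := by
  have hEE : E * conj E = 1 := by rw [mul_conj', hE]; simp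
  constructor
  · intro hz
    have hreal : conj (conj E * z) = conj E * z := by
      rw [map_mul, conj_conj]
      linear_combination (-conj E) * hz - E * conj z * hEE
    refine ⟨(conj E * z).re, ?_⟩
    rw [conj_eq_iff_re.mp hreal]
    linear_combination (-z) * hEE
  · rintro ⟨t, rfl⟩
    rw [map_mul, conj_ofReal]
    linear_combination (-E * t) * hEE

theorem forall_re_sum_mul_ofReal_eq_zero_iff {ι : Type*} [Fintype ι] (w : ι → ℂ) :
    (∀ t : ι → ℝ, (∑ k, w k * t k).re = 0) ↔ ∀ k, (w k).re = 0 := by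
  classical
  refine ⟨fun h k => ?_, fun h t => by simp [re_sum, h]⟩
  simpa [re_sum, re_mul_ofReal, Pi.single_apply] using h (Pi.single k 1)

theorem forall_re_dotProduct_add_dotProduct_star_eq_zero_iff {ι : Type*} [Fintype ι] {E : ℂ}
    (hE : ‖E‖ = 1) (a b : ι → ℂ) :
    (∀ y : ι → ℂ, y = E ^ 2 • star y → (a ⬝ᵥ y + b ⬝ᵥ star y).re = 0) ↔
      ∀ k, (a k * E + b k * conj E).re = 0 := by
  have hsol : ∀ y : ι → ℂ, y = E ^ 2 • star y ↔ ∃ t : ι → ℝ, y = fun k => E * t k := by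
    intro y
    simp only [funext_iff, Pi.smul_apply, Pi.star_apply, smul_eq_mul, RCLike.star_def,
      eq_sq_mul_conj_iff hE]
    exact Classical.skolem
  have hform : ∀ t : ι → ℝ, a ⬝ᵥ (fun k => E * t k) + b ⬝ᵥ star (fun k => E * t k)
      = ∑ k, (a k * E + b k * conj E) * t k := by
    intro t
    simp only [dotProduct, ← Finset.sum_add_distrib]
    refine Finset.sum_congr rfl fun k _ => ?_
    simp only [Pi.star_apply, RCLike.star_def, map_mul, conj_ofReal]
    ring
  simp only [hsol, forall_exists_index]
  rw [forall_comm]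
  simp only [forall_eq, hform]
  exact forall_re_sum_mul_ofReal_eq_zero_iff fun k => a k * E + b k * conj E

theorem re_mul_add_mul_conj (E a b : ℂ) :
    (a * E + b * conj E).re = (conj E * (conj a + b)).re := by
  simp only [add_re, add_im, mul_re, conj_re, conj_im]
  ring

theorem statement17_general
    (γ : ℂ) (hγ0 : γ ≠ 0) (hγ : ‖γ‖ < 1)
    (θ : ℝ)
    (μ : ℂ)
    (hμ : μ = (((1 - ‖γ‖ ^ 2) / (4 * ‖γ‖ ^ 2) : ℝ) : ℂ)
      * Complex.exp (θ * Complex.I))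
    (c d : Fin n → ℂ) :
    (∀ y : Fin n → ℂ,
      ((1 - ((‖γ‖ : ℂ)) ^ 2) • y
          = ((4 : ℂ) * ((‖γ‖ : ℂ)) ^ 2 * μ) • star y) →
        (γ * ((star c) ⬝ᵥ y) + (((4 : ℂ) * γ * μ) • star c - d) ⬝ᵥ (star y)).re = 0) ↔
    (∀ j : Fin n,
      (Complex.I * Complex.exp (-(θ * Complex.I) / 2)
        * ((starRingEnd ℂ) γ * c j + 4 * γ * μ * (starRingEnd ℂ) (c j) - d j)).im = 0) := by
  set E : ℂ := exp (↑(θ / 2) * I) with hE_def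
  have hE_sq : E ^ 2 = exp (θ * I) := by
    rw [hE_def, ← Complex.exp_nat_mul]; push_cast; ring_nf
  have hE_conj : conj E = exp (-(θ * I) / 2) := by
    rw [hE_def, ← Complex.exp_conj, map_mul, conj_ofReal, conj_I]; push_cast; ring_nf
  have hγ_ne : (‖γ‖ : ℂ) ≠ 0 := by simpa using hγ0
  have hs : (1 : ℂ) - (‖γ‖ : ℂ) ^ 2 ≠ 0 := by
    exact_mod_cast (by nlinarith [norm_nonneg γ] : (1 : ℝ) - ‖γ‖ ^ 2 ≠ 0)
  have hcon (y : Fin n → ℂ) : (1 - (‖γ‖ : ℂ) ^ 2) • y = ((4 : ℂ) * (‖γ‖ : ℂ) ^ 2 * μ) • star y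
      ↔ y = E ^ 2 • star y := by
    rw [show (4 : ℂ) * (‖γ‖ : ℂ) ^ 2 * μ = (1 - (‖γ‖ : ℂ) ^ 2) * E ^ 2 by
      rw [hμ, hE_sq]; push_cast; field_simp, ← smul_smul, smul_right_inj hs]
  have hE : ‖E‖ = 1 := norm_exp_ofReal_mul_I _
  have key := forall_re_dotProduct_add_dotProduct_star_eq_zero_iff hE
    (γ • star c) ((4 * γ * μ) • star c - d)
  simp only [smul_dotProduct, smul_eq_mul] at key
  simp only [hcon, key]
  refine forall_congr' fun j => ?_
  rw [← hE_conj, mul_assoc I, I_mul_im, re_mul_add_mul_conj]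
  simp only [Pi.sub_apply, Pi.smul_apply, Pi.star_apply, smul_eq_mul, RCLike.star_def, map_mul,
    conj_conj, add_sub_assoc]

/-- the `μ ≠ 0` case of the remark following Theorem 6.1 of the paper.
For `0 ≠ γ`, `|γ| < 1`, `θ ∈ [0,2π)`, `μ = ((1-|γ|²)/(4|γ|²))e^{iθ}` and `c, d ∈ ℂⁿ`:
`Re(γ c̄·y + (4γμ c̄ - d)·ȳ) = 0` for every `y` with `(1-|γ|²)y = 4|γ|²μ ȳ` iff every
component of `i e^{-iθ/2}(γ̄ c + 4γμ c̄ - d)` is real. -/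
theorem statement17
    (γ : ℂ) (hγ0 : γ ≠ 0) (hγ : ‖γ‖ < 1)
    (θ : ℝ) (hθ : θ ∈ Set.Ico (0 : ℝ) (2 * π))
    (μ : ℂ)
    (hμ : μ = (((1 - ‖γ‖ ^ 2) / (4 * ‖γ‖ ^ 2) : ℝ) : ℂ)
      * Complex.exp (θ * Complex.I))
    (c d : Fin n → ℂ) :
    (∀ y : Fin n → ℂ,
      ((1 - ((‖γ‖ : ℂ)) ^ 2) • y
          = ((4 : ℂ) * ((‖γ‖ : ℂ)) ^ 2 * μ) • star y) →
        (γ * ((star c) ⬝ᵥ y) + (((4 : ℂ) * γ * μ) • star c - d) ⬝ᵥ (star y)).re = 0) ↔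
    (∀ j : Fin n,
      (Complex.I * Complex.exp (-(θ * Complex.I) / 2)
        * ((starRingEnd ℂ) γ * c j + 4 * γ * μ * (starRingEnd ℂ) (c j) - d j)).im = 0) :=
  statement17_general γ hγ0 hγ θ μ hμ c d

end BergerCoburn
end
end
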